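/- arXiv:math-ph/9910003 — 2 statements merged into one kernel-verified Lean document; each statement's English description precedes it below -/
import Mathlib

section
/- Let α > 0 and let h : (0,∞) → ℝ satisfy h(M) < 0 for all M > 0 and h(M₁) ≥ (M₁/M₂)^{1+α}·h(M₂) whenever 0 < M₁ ≤ M₂. Then h is strictly subadditive in the sense that h(M) < h(M-m) + h(m) for all 0 < m < M. -/
/-! Rescaling `h (M - m)` and `h m` from `h M` with the scaling inequality gives
`h (M - m) + h m ≥ (t ^ (1 + α) + (1 - t) ^ (1 + α)) * h M` with `t = m / M`; since the
exponent exceeds `1`, the coefficient is `< 1`, and `h M < 0` makes the bound strictly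
larger than `h M`. -/

theorem Real.rpow_add_one_sub_rpow_lt_one {p t : ℝ} (hp : 1 < p) (ht₀ : 0 < t) (ht₁ : t < 1) :
    t ^ p + (1 - t) ^ p < 1 := by
  have hlt : t ^ p < t := by
    simpa using Real.rpow_lt_rpow_of_exponent_gt ht₀ ht₁ hp
  have hlt' : (1 - t) ^ p < 1 - t := by
    simpa using Real.rpow_lt_rpow_of_exponent_gt (sub_pos.2 ht₁) (by linarith) hp
  linarith

/-- If `h M < 0` for all `M > 0` and `h M₁ ≥ (M₁/M₂)^(1+α) h M₂` for
`0 < M₁ ≤ M₂`, then `h M < h (M - m) + h m` for `0 < m < M`. -/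
theorem stmt_1 (α : ℝ) (hα : 0 < α) (h : ℝ → ℝ)
    (hneg : ∀ M : ℝ, 0 < M → h M < 0)
    (hscale : ∀ M₁ M₂ : ℝ, 0 < M₁ → M₁ ≤ M₂ →
      (M₁ / M₂) ^ (1 + α) * h M₂ ≤ h M₁) :
    ∀ m M : ℝ, 0 < m → m < M → h M < h (M - m) + h m := by
  intro m M hm hmM
  have hM : 0 < M := hm.trans hmM
  set t := m / M
  have hcompl : (M - m) / M = 1 - t := by rw [sub_div, div_self hM.ne']
  have hcoeff : t ^ (1 + α) + (1 - t) ^ (1 + α) < 1 :=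
    Real.rpow_add_one_sub_rpow_lt_one (by linarith) (div_pos hm hM) ((div_lt_one hM).2 hmM)
  have hrest := hscale (M - m) M (sub_pos.2 hmM) (by linarith)
  rw [hcompl] at hrest
  have hpart := hscale m M hm hmM.le
  calc h M < (t ^ (1 + α) + (1 - t) ^ (1 + α)) * h M := by
        simpa using mul_lt_mul_of_neg_right hcoeff (hneg M hM)
    _ ≤ h (M - m) + h m := by linarith
end

section
/- Let ρ, σ ∈ L¹(ℝ³) be nonnegative with ∫ρ = ∫σ = M, and suppose ρ, σ ∈ L^{4/3}(ℝ³). Then for every R > 1, the double integral ∬ ρ(x)σ(y)/|x-y| dx dy is bounded by R·M·sup_{y∈ℝ³} ∫_{|x-y|<R} ρ(x) dx + M²/R + C·‖ρ‖_{4/3}·‖σ‖_{4/3}·R^{-1/2}, for a universal constant C. -/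
open MeasureTheory ENNReal

notation "E3" => EuclideanSpace ℝ (Fin 3)


lemma rpow_helper (a b d : ℝ≥0∞) :
    a * b * d = (a ^ (4/3 : ℝ) * d ^ (2 : ℝ)) ^ (1/4 : ℝ) *
      ((b ^ (4/3 : ℝ) * d ^ (2 : ℝ)) ^ (1/4 : ℝ) *
       (a ^ (4/3 : ℝ) * b ^ (4/3 : ℝ)) ^ (1/2 : ℝ)) := by
  rw [ENNReal.mul_rpow_of_nonneg _ _ (by norm_num : (0:ℝ) ≤ 1/4),
      ENNReal.mul_rpow_of_nonneg _ _ (by norm_num : (0:ℝ) ≤ 1/4),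
      ENNReal.mul_rpow_of_nonneg _ _ (by norm_num : (0:ℝ) ≤ 1/2)]
  simp only [← ENNReal.rpow_mul]
  rw [show (4/3 * (1/4) : ℝ) = 1/3 by norm_num, show (2 * (1/4) : ℝ) = 1/2 by norm_num,
      show (4/3 * (1/2) : ℝ) = 2/3 by norm_num]
  calc a * b * d
      = (a ^ (1/3:ℝ) * a ^ (2/3:ℝ)) * (b ^ (1/3:ℝ) * b ^ (2/3:ℝ)) *
        (d ^ (1/2:ℝ) * d ^ (1/2:ℝ)) := by
        rw [← ENNReal.rpow_add_of_nonneg _ _ (by norm_num) (by norm_num),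
            ← ENNReal.rpow_add_of_nonneg _ _ (by norm_num) (by norm_num),
            ← ENNReal.rpow_add_of_nonneg _ _ (by norm_num) (by norm_num)]
        norm_num
    _ = _ := by ring

lemma holder3 {α : Type*} [MeasurableSpace α] (μ : Measure α) (A B D : α → ℝ≥0∞)
    (hA : Measurable A) (hB : Measurable B) (hD : Measurable D) :
    ∫⁻ x, A x * B x * D x ∂μ ≤
      (∫⁻ x, A x ^ (4/3 : ℝ) * D x ^ (2 : ℝ) ∂μ) ^ (1/4 : ℝ) *
      (∫⁻ x, B x ^ (4/3 : ℝ) * D x ^ (2 : ℝ) ∂μ) ^ (1/4 : ℝ) *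
      (∫⁻ x, A x ^ (4/3 : ℝ) * B x ^ (4/3 : ℝ) ∂μ) ^ (1/2 : ℝ) := by
  set H : α → ℝ≥0∞ := fun x => A x ^ (4/3 : ℝ) * D x ^ (2 : ℝ) with hH
  set G : α → ℝ≥0∞ := fun x => B x ^ (4/3 : ℝ) * D x ^ (2 : ℝ) with hG
  set P : α → ℝ≥0∞ := fun x => A x ^ (4/3 : ℝ) * B x ^ (4/3 : ℝ) with hP
  have hHm : Measurable H := (hA.pow_const _).mul (hD.pow_const _)
  have hGm : Measurable G := (hB.pow_const _).mul (hD.pow_const _)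
  have hPm : Measurable P := (hA.pow_const _).mul (hB.pow_const _)
  have hold2 : ∫⁻ x, G x ^ (1/3:ℝ) * P x ^ (2/3:ℝ) ∂μ ≤
      (∫⁻ x, G x ∂μ) ^ (1/3:ℝ) * (∫⁻ x, P x ∂μ) ^ (2/3:ℝ) := by
    have h := ENNReal.lintegral_mul_le_Lp_mul_Lq μ (p := 3) (q := 3/2)
      ⟨by norm_num, by norm_num, by norm_num⟩ (hGm.pow_const ((1:ℝ)/3)).aemeasurable
      (hPm.pow_const ((2:ℝ)/3)).aemeasurable
    simp only [Pi.mul_apply, ← ENNReal.rpow_mul] at h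
    rw [show ((1:ℝ)/3 * 3) = 1 by norm_num, show ((2:ℝ)/3 * (3/2)) = 1 by norm_num] at h
    simp only [ENNReal.rpow_one] at h
    convert h using 2 <;> norm_num
  have hold1 : ∫⁻ x, H x ^ (1/4:ℝ) * (G x ^ (1/4:ℝ) * P x ^ (1/2:ℝ)) ∂μ ≤
      (∫⁻ x, H x ∂μ) ^ (1/4:ℝ) *
        (∫⁻ x, G x ^ (1/3:ℝ) * P x ^ (2/3:ℝ) ∂μ) ^ (3/4:ℝ) := by
    have h := ENNReal.lintegral_mul_le_Lp_mul_Lq μ (p := 4) (q := 4/3)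
      ⟨by norm_num, by norm_num, by norm_num⟩ (hHm.pow_const ((1:ℝ)/4)).aemeasurable
      (((hGm.pow_const ((1:ℝ)/4)).mul (hPm.pow_const ((1:ℝ)/2)))).aemeasurable
    simp only [Pi.mul_apply] at h
    refine le_trans h ?_
    have e1 : ∀ x, (H x ^ (1/4:ℝ)) ^ (4:ℝ) = H x := by
      intro x; rw [← ENNReal.rpow_mul]; norm_num
    have e2 : ∀ x, (G x ^ (1/4:ℝ) * P x ^ (1/2:ℝ)) ^ ((4:ℝ)/3) =
        G x ^ (1/3:ℝ) * P x ^ (2/3:ℝ) := by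
      intro x
      rw [ENNReal.mul_rpow_of_nonneg _ _ (by norm_num : (0:ℝ) ≤ 4/3),
          ← ENNReal.rpow_mul, ← ENNReal.rpow_mul]
      norm_num
    simp only [e1, e2]
    rw [show (1 / ((4:ℝ)/3)) = (3/4 : ℝ) by norm_num]
  calc ∫⁻ x, A x * B x * D x ∂μ
      = ∫⁻ x, H x ^ (1/4:ℝ) * (G x ^ (1/4:ℝ) * P x ^ (1/2:ℝ)) ∂μ := by
        refine lintegral_congr fun x => ?_
        exact rpow_helper (A x) (B x) (D x)
    _ ≤ (∫⁻ x, H x ∂μ) ^ (1/4:ℝ) *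
        (∫⁻ x, G x ^ (1/3:ℝ) * P x ^ (2/3:ℝ) ∂μ) ^ (3/4:ℝ) := hold1
    _ ≤ (∫⁻ x, H x ∂μ) ^ (1/4:ℝ) *
        ((∫⁻ x, G x ∂μ) ^ (1/3:ℝ) * (∫⁻ x, P x ∂μ) ^ (2/3:ℝ)) ^ (3/4:ℝ) := by
        gcongr <;> norm_num
    _ = (∫⁻ x, H x ∂μ) ^ (1/4:ℝ) * ((∫⁻ x, G x ∂μ) ^ (1/4:ℝ) * (∫⁻ x, P x ∂μ) ^ (1/2:ℝ)) := by
        rw [ENNReal.mul_rpow_of_nonneg _ _ (by norm_num : (0:ℝ) ≤ 3/4),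
          ← ENNReal.rpow_mul, ← ENNReal.rpow_mul]
        norm_num
    _ = _ := by rw [mul_assoc]



lemma ball_inv_sq_lintegral {r : ℝ} (hr : 0 < r) :
    ∫⁻ z in Metric.ball (0 : E3) r, ENNReal.ofReal ‖z‖⁻¹ ^ (2:ℝ) ≤
      8 * ENNReal.ofReal r * volume (Metric.ball (0 : E3) 1) := by
  set B := volume (Metric.ball (0 : E3) 1) with hB
  set φ : E3 → ℝ≥0∞ := fun z => ENNReal.ofReal ‖z‖⁻¹ ^ (2:ℝ) with hφ
  set s : ℕ → Set E3 := fun k =>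
    Metric.closedBall 0 (r * (2⁻¹:ℝ)^k) \ Metric.ball 0 (r * (2⁻¹:ℝ)^(k+1)) with hs
  have cover : Metric.ball (0 : E3) r ⊆ {0} ∪ ⋃ k, s k := by
    intro z hz
    rcases eq_or_ne z 0 with h0 | h0
    · exact Or.inl h0
    · right
      have hzpos : 0 < ‖z‖ := norm_pos_iff.mpr h0
      have hzr : ‖z‖ / r < 1 := by
        rw [div_lt_one hr]
        simpa [Metric.mem_ball, dist_zero_right] using hz
      have hex : ∃ n : ℕ, (2⁻¹:ℝ)^n < ‖z‖ / r :=
        exists_pow_lt_of_lt_one (div_pos hzpos hr) (by norm_num)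
      classical
      set n := Nat.find hex with hn
      have hnlt : (2⁻¹:ℝ)^n < ‖z‖ / r := Nat.find_spec hex
      have hn0 : n ≠ 0 := by
        intro h
        rw [h] at hnlt
        simp at hnlt
        linarith
      obtain ⟨m, hm⟩ := Nat.exists_eq_succ_of_ne_zero hn0
      have hmle : ‖z‖ / r ≤ (2⁻¹:ℝ)^m := by
        have := Nat.find_min hex (m := m) (by omega)
        linarith [not_lt.mp this]
      refine Set.mem_iUnion.mpr ⟨m, ?_, ?_⟩
      · rw [Metric.mem_closedBall, dist_zero_right]
        calc ‖z‖ = (‖z‖ / r) * r := by field_simp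
          _ ≤ (2⁻¹:ℝ)^m * r := by nlinarith
          _ = r * (2⁻¹:ℝ)^m := by ring
      · rw [Metric.mem_ball, dist_zero_right]
        push_neg
        have : (2⁻¹:ℝ)^(m+1) < ‖z‖ / r := by rw [← Nat.succ_eq_add_one, ← hm]; exact hnlt
        calc r * (2⁻¹:ℝ)^(m+1) ≤ r * (‖z‖ / r) := by nlinarith
          _ = ‖z‖ := by field_simp
  have hsmeas : ∀ k, MeasurableSet (s k) :=
    fun k => measurableSet_closedBall.diff measurableSet_ball
  have step1 : ∫⁻ z in Metric.ball (0 : E3) r, φ z ≤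
      (∫⁻ z in {(0:E3)}, φ z) + ∫⁻ z in ⋃ k, s k, φ z :=
    le_trans (lintegral_mono_set cover) (lintegral_union_le _ _ _)
  have h0 : ∫⁻ z in {(0:E3)}, φ z = 0 :=
    setLIntegral_measure_zero _ _ (measure_singleton 0)
  have hsk : ∀ k : ℕ, ∫⁻ z in s k, φ z ≤ ENNReal.ofReal (4 * r * (2⁻¹:ℝ)^k) * B := by
    intro k
    have hrk : 0 < r * (2⁻¹:ℝ)^(k+1) := by positivity
    have bound : ∀ z ∈ s k, φ z ≤ ENNReal.ofReal ((r * (2⁻¹:ℝ)^(k+1))⁻¹) ^ (2:ℝ) := by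
      intro z hz
      have hz2 : r * (2⁻¹:ℝ)^(k+1) ≤ ‖z‖ := by
        have := hz.2
        rw [Metric.mem_ball, dist_zero_right, not_lt] at this
        exact this
      refine ENNReal.rpow_le_rpow ?_ (by norm_num)
      exact ENNReal.ofReal_le_ofReal (inv_anti₀ hrk hz2)
    calc ∫⁻ z in s k, φ z
        ≤ ∫⁻ _ in s k, ENNReal.ofReal ((r * (2⁻¹:ℝ)^(k+1))⁻¹) ^ (2:ℝ) :=
          setLIntegral_mono' (hsmeas k) bound
      _ = ENNReal.ofReal ((r * (2⁻¹:ℝ)^(k+1))⁻¹) ^ (2:ℝ) * volume (s k) := by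
          rw [setLIntegral_const]
      _ ≤ ENNReal.ofReal ((r * (2⁻¹:ℝ)^(k+1))⁻¹) ^ (2:ℝ) *
            volume (Metric.closedBall (0:E3) (r * (2⁻¹:ℝ)^k)) := by
          gcongr
          exact Set.diff_subset
      _ = ENNReal.ofReal ((r * (2⁻¹:ℝ)^(k+1))⁻¹) ^ (2:ℝ) *
            (ENNReal.ofReal ((r * (2⁻¹:ℝ)^k) ^ 3) * B) := by
          rw [Measure.addHaar_closedBall _ _ (by positivity)]
          congr 2
          simp
      _ = ENNReal.ofReal (((r * (2⁻¹:ℝ)^(k+1))⁻¹) ^ (2:ℕ) * (r * (2⁻¹:ℝ)^k) ^ 3) * B := by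
          rw [ENNReal.ofReal_rpow_of_nonneg (by positivity) (by norm_num),
            show ((2:ℝ)) = ((2:ℕ):ℝ) by norm_num, Real.rpow_natCast,
            ← mul_assoc, ← ENNReal.ofReal_mul (by positivity)]
      _ = ENNReal.ofReal (4 * r * (2⁻¹:ℝ)^k) * B := by
          congr 1
          apply congrArg
          have h2 : ((2:ℝ))^(k+1) ≠ 0 := by positivity
          field_simp
          ring
  have tsum_bound : ∑' k, ENNReal.ofReal (4 * r * (2⁻¹:ℝ)^k) * B =
      8 * ENNReal.ofReal r * B := by
    rw [ENNReal.tsum_mul_right]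
    congr 1
    have : ∀ k : ℕ, ENNReal.ofReal (4 * r * (2⁻¹:ℝ)^k) =
        ENNReal.ofReal (4 * r) * (2⁻¹ : ℝ≥0∞)^k := by
      intro k
      rw [ENNReal.ofReal_mul (by positivity), ENNReal.ofReal_pow (by norm_num)]
      congr 2
      rw [ENNReal.ofReal_inv_of_pos (by norm_num)]
      norm_num
    simp_rw [this]
    rw [ENNReal.tsum_mul_left, ENNReal.tsum_geometric]
    rw [show (1 - 2⁻¹ : ℝ≥0∞) = 2⁻¹ by
      rw [ENNReal.sub_eq_of_eq_add (by norm_num)]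
      rw [ENNReal.inv_two_add_inv_two]]
    rw [inv_inv, ENNReal.ofReal_mul (by norm_num), ENNReal.ofReal_ofNat]
    ring
  calc ∫⁻ z in Metric.ball (0 : E3) r, φ z
      ≤ (∫⁻ z in {(0:E3)}, φ z) + ∫⁻ z in ⋃ k, s k, φ z := step1
    _ = ∫⁻ z in ⋃ k, s k, φ z := by rw [h0, zero_add]
    _ ≤ ∑' k, ∫⁻ z in s k, φ z := lintegral_iUnion_le _ _
    _ ≤ ∑' k, ENNReal.ofReal (4 * r * (2⁻¹:ℝ)^k) * B := ENNReal.tsum_le_tsum hsk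
    _ = 8 * ENNReal.ofReal r * B := tsum_bound

lemma main_meas (ρ σ : E3 → ℝ) (M R : ℝ)
    (hρm : Measurable ρ) (hσm : Measurable σ)
    (hρ0 : ∀ x, 0 ≤ ρ x) (hσ0 : ∀ x, 0 ≤ σ x)
    (hρi : Integrable ρ volume) (hσi : Integrable σ volume)
    (hρM : (∫ x, ρ x) = M) (hσM : (∫ x, σ x) = M)
    (hρp : MemLp ρ (ENNReal.ofReal (4 / 3)) volume)
    (hσp : MemLp σ (ENNReal.ofReal (4 / 3)) volume)
    (hR : 1 < R) :
    (∫ x, ∫ y, ρ x * σ y / ‖x - y‖) ≤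
      R * M * (⨆ y : E3, ∫ x in Metric.ball y R, ρ x)
      + M ^ 2 / R
      + (8 * (volume (Metric.ball (0:E3) 1)).toReal) ^ ((1:ℝ)/2)
          * (eLpNorm ρ (ENNReal.ofReal (4 / 3)) volume).toReal
          * (eLpNorm σ (ENNReal.ofReal (4 / 3)) volume).toReal
          * R ^ (-(1 : ℝ) / 2) := by
  have hRpos : (0:ℝ) < R := lt_trans one_pos hR
  have hRinv : (0:ℝ) < R⁻¹ := inv_pos.mpr hRpos
  set B := volume (Metric.ball (0:E3) 1) with hBdef
  have hBne : B ≠ ∞ := measure_ball_lt_top.ne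
  set B' := B.toReal with hB'def
  have hB'0 : 0 ≤ B' := ENNReal.toReal_nonneg
  set CC : ℝ := (8 * B') ^ ((1:ℝ)/2) with hCC
  set p : ℝ≥0∞ := ENNReal.ofReal (4/3) with hpdef
  have hp0 : p ≠ 0 := by
    rw [hpdef]
    exact (ENNReal.ofReal_pos.mpr (by norm_num)).ne'
  have hpt : p ≠ ∞ := ENNReal.ofReal_ne_top
  have hp43 : p.toReal = 4/3 := by rw [hpdef, ENNReal.toReal_ofReal (by norm_num)]
  -- ennreal versions
  set f : E3 → ℝ≥0∞ := fun x => ENNReal.ofReal (ρ x) with hfdef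
  set g : E3 → ℝ≥0∞ := fun x => ENNReal.ofReal (σ x) with hgdef
  have hfm : Measurable f := hρm.ennreal_ofReal
  have hgm : Measurable g := hσm.ennreal_ofReal
  set k : E3 → ℝ≥0∞ := fun z => ENNReal.ofReal ‖z‖⁻¹ with hkdef
  have hkm : Measurable k := measurable_norm.inv.ennreal_ofReal
  set k1 : E3 → ℝ≥0∞ := fun z => Set.indicator (Metric.ball (0:E3) R⁻¹) k z with hk1def
  have hk1m : Measurable k1 := hkm.indicator measurableSet_ball
  set ind : E3 → ℝ≥0∞ := fun z => Set.indicator (Metric.ball (0:E3) R) (fun _ => 1) z with hinddef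
  have hindm : Measurable ind := measurable_const.indicator measurableSet_ball
  -- kernel splitting
  have ksplit : ∀ z, k z ≤ k1 z + ENNReal.ofReal R * ind z + ENNReal.ofReal R⁻¹ := by
    intro z
    by_cases h1 : z ∈ Metric.ball (0:E3) R⁻¹
    · have : k1 z = k z := Set.indicator_of_mem h1 k
      rw [this]
      exact le_add_of_le_of_nonneg (le_add_of_le_of_nonneg le_rfl zero_le) zero_le
    · have hz1 : R⁻¹ ≤ ‖z‖ := by
        rw [Metric.mem_ball, dist_zero_right, not_lt] at h1
        exact h1
      have hzpos : (0:ℝ) < ‖z‖ := lt_of_lt_of_le hRinv hz1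
      by_cases h2 : z ∈ Metric.ball (0:E3) R
      · have hind : ind z = 1 := Set.indicator_of_mem h2 _
        have : k z ≤ ENNReal.ofReal R * ind z := by
          rw [hind, mul_one]
          refine ENNReal.ofReal_le_ofReal ?_
          rw [← inv_inv R]
          exact inv_anti₀ hRinv hz1
        calc k z ≤ ENNReal.ofReal R * ind z := this
          _ ≤ k1 z + ENNReal.ofReal R * ind z + ENNReal.ofReal R⁻¹ := by
              exact le_add_of_le_of_nonneg (le_add_of_nonneg_of_le zero_le le_rfl) zero_le
      · have hz2 : R ≤ ‖z‖ := by
          rw [Metric.mem_ball, dist_zero_right, not_lt] at h2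
          exact h2
        have : k z ≤ ENNReal.ofReal R⁻¹ := by
          refine ENNReal.ofReal_le_ofReal ?_
          exact inv_anti₀ hRpos hz2
        exact le_add_of_nonneg_of_le zero_le this
  -- masses
  have hM0 : 0 ≤ M := hρM ▸ integral_nonneg hρ0
  have hfint : ∫⁻ x, f x = ENNReal.ofReal M := by
    rw [hfdef, ← ofReal_integral_eq_lintegral_ofReal hρi (Filter.Eventually.of_forall hρ0), hρM]
  have hgint : ∫⁻ x, g x = ENNReal.ofReal M := by
    rw [hgdef, ← ofReal_integral_eq_lintegral_ofReal hσi (Filter.Eventually.of_forall hσ0), hσM]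
  -- sup of local masses
  set S : ℝ := ⨆ y : E3, ∫ x in Metric.ball y R, ρ x with hSdef
  have hbdd : BddAbove (Set.range fun y : E3 => ∫ x in Metric.ball y R, ρ x) := by
    refine ⟨M, ?_⟩
    rintro _ ⟨y, rfl⟩
    rw [← hρM]
    exact setIntegral_le_integral hρi (Filter.Eventually.of_forall hρ0)
  have hS0 : 0 ≤ S := by
    refine Real.iSup_nonneg fun y => ?_
    exact setIntegral_nonneg measurableSet_ball fun x _ => hρ0 x
  have hSle : ∀ y : E3, ENNReal.ofReal (∫ x in Metric.ball y R, ρ x) ≤ ENNReal.ofReal S :=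
    fun y => ENNReal.ofReal_le_ofReal (le_ciSup hbdd y)
  -- L^{4/3} norms
  set Nf := ∫⁻ x, f x ^ (4/3:ℝ) with hNfdef
  set Ng := ∫⁻ x, g x ^ (4/3:ℝ) with hNgdef
  have hNfe : eLpNorm ρ p volume = Nf ^ (3/4:ℝ) := by
    rw [eLpNorm_eq_lintegral_rpow_enorm_toReal hp0 hpt, hp43,
      show (1 / (4/3:ℝ)) = 3/4 by norm_num]
    congr 1
    refine lintegral_congr fun x => ?_
    rw [Real.enorm_eq_ofReal (hρ0 x)]
  have hNge : eLpNorm σ p volume = Ng ^ (3/4:ℝ) := by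
    rw [eLpNorm_eq_lintegral_rpow_enorm_toReal hp0 hpt, hp43,
      show (1 / (4/3:ℝ)) = 3/4 by norm_num]
    congr 1
    refine lintegral_congr fun x => ?_
    rw [Real.enorm_eq_ofReal (hσ0 x)]
  have hNf_fin : Nf ^ (3/4:ℝ) ≠ ∞ := hNfe ▸ hρp.eLpNorm_ne_top
  have hNg_fin : Ng ^ (3/4:ℝ) ≠ ∞ := hNge ▸ hσp.eLpNorm_ne_top
  have hNf_or : Nf ^ (3/4:ℝ) = ENNReal.ofReal ((eLpNorm ρ p volume).toReal) := by
    rw [← hNfe, ENNReal.ofReal_toReal hρp.eLpNorm_ne_top]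
  have hNg_or : Ng ^ (3/4:ℝ) = ENNReal.ofReal ((eLpNorm σ p volume).toReal) := by
    rw [← hNge, ENNReal.ofReal_toReal hσp.eLpNorm_ne_top]
  -- translation invariance
  have trans_left : ∀ (ψ : E3 → ℝ≥0∞), Measurable ψ → ∀ x : E3,
      (∫⁻ y, ψ (x - y)) = ∫⁻ z, ψ z := by
    intro ψ hψ x
    conv_rhs => rw [← Measure.map_sub_left_eq_self (volume : Measure E3) x]
    rw [lintegral_map (g := fun t : E3 => x - t) hψ ((measurable_const.sub measurable_id) : Measurable fun t : E3 => x - t)]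
  have trans_right : ∀ (ψ : E3 → ℝ≥0∞), Measurable ψ → ∀ y : E3,
      (∫⁻ x, ψ (x - y)) = ∫⁻ z, ψ z := by
    intro ψ _ y
    exact lintegral_sub_right_eq_self ψ y
  -- K2
  set K2 := ∫⁻ z, k1 z ^ (2:ℝ) with hK2def
  have hk1rpow : ∀ z, k1 z ^ (2:ℝ) =
      Set.indicator (Metric.ball (0:E3) R⁻¹) (fun z => k z ^ (2:ℝ)) z := by
    intro z
    by_cases h : z ∈ Metric.ball (0:E3) R⁻¹
    · rw [hk1def]
      simp only [Set.indicator_of_mem h]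
    · rw [hk1def]
      simp only [Set.indicator_of_notMem h]
      rw [ENNReal.zero_rpow_of_pos (by norm_num)]
  have hK2 : K2 ≤ 8 * ENNReal.ofReal R⁻¹ * B := by
    calc K2 = ∫⁻ z in Metric.ball (0:E3) R⁻¹, k z ^ (2:ℝ) := by
          rw [hK2def]
          simp_rw [hk1rpow]
          exact lintegral_indicator measurableSet_ball _
      _ ≤ 8 * ENNReal.ofReal R⁻¹ * B := ball_inv_sq_lintegral hRinv
  -- product measure
  set π : Measure (E3 × E3) := (volume : Measure E3).prod volume with hπdef
  have hsubm : Measurable fun q : E3 × E3 => q.1 - q.2 := measurable_fst.sub measurable_snd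
  have Ψm : Measurable fun q : E3 × E3 => f q.1 * g q.2 * k (q.1 - q.2) :=
    ((hfm.comp measurable_fst).mul (hgm.comp measurable_snd)).mul (hkm.comp hsubm)
  have Ψ1m : Measurable fun q : E3 × E3 => f q.1 * g q.2 * k1 (q.1 - q.2) :=
    ((hfm.comp measurable_fst).mul (hgm.comp measurable_snd)).mul (hk1m.comp hsubm)
  have Ψ2m : Measurable fun q : E3 × E3 =>
      f q.1 * g q.2 * (ENNReal.ofReal R * ind (q.1 - q.2)) :=
    ((hfm.comp measurable_fst).mul (hgm.comp measurable_snd)).mul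
      (measurable_const.mul (hindm.comp hsubm))
  have Ψ3m : Measurable fun q : E3 × E3 => f q.1 * g q.2 * ENNReal.ofReal R⁻¹ :=
    ((hfm.comp measurable_fst).mul (hgm.comp measurable_snd)).mul measurable_const
  -- the three double integrals
  have hm1 : Measurable fun q : E3 × E3 => f q.1 ^ (4/3:ℝ) * k1 (q.1 - q.2) ^ (2:ℝ) :=
    ((hfm.comp measurable_fst).pow_const _).mul ((hk1m.comp hsubm).pow_const _)
  have hm2 : Measurable fun q : E3 × E3 => g q.2 ^ (4/3:ℝ) * k1 (q.1 - q.2) ^ (2:ℝ) :=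
    ((hgm.comp measurable_snd).pow_const _).mul ((hk1m.comp hsubm).pow_const _)
  have hm3 : Measurable fun q : E3 × E3 => f q.1 ^ (4/3:ℝ) * g q.2 ^ (4/3:ℝ) :=
    ((hfm.comp measurable_fst).pow_const _).mul ((hgm.comp measurable_snd).pow_const _)
  have hIH : ∫⁻ q : E3 × E3, f q.1 ^ (4/3:ℝ) * k1 (q.1 - q.2) ^ (2:ℝ) ∂π = Nf * K2 := by
    rw [hπdef, lintegral_prod _ hm1.aemeasurable]
    have inner : ∀ x : E3, (∫⁻ y, f x ^ (4/3:ℝ) * k1 (x - y) ^ (2:ℝ)) = f x ^ (4/3:ℝ) * K2 := by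
      intro x
      have hky : Measurable fun y : E3 => k1 (x - y) ^ (2:ℝ) :=
        (hk1m.comp (measurable_const.sub measurable_id)).pow_const _
      rw [lintegral_const_mul _ hky]
      rw [show (∫⁻ y, k1 (x - y) ^ (2:ℝ)) = K2 from
        trans_left (fun z => k1 z ^ (2:ℝ)) (hk1m.pow_const _) x]
    simp_rw [inner]
    exact lintegral_mul_const _ (hfm.pow_const _)
  have hIG : ∫⁻ q : E3 × E3, g q.2 ^ (4/3:ℝ) * k1 (q.1 - q.2) ^ (2:ℝ) ∂π = Ng * K2 := by
    rw [hπdef, lintegral_prod_symm _ hm2.aemeasurable]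
    have inner : ∀ y : E3, (∫⁻ x, g y ^ (4/3:ℝ) * k1 (x - y) ^ (2:ℝ)) = g y ^ (4/3:ℝ) * K2 := by
      intro y
      have hkx : Measurable fun x : E3 => k1 (x - y) ^ (2:ℝ) :=
        (hk1m.comp (measurable_id.sub measurable_const)).pow_const _
      rw [lintegral_const_mul _ hkx]
      rw [show (∫⁻ x, k1 (x - y) ^ (2:ℝ)) = K2 from
        trans_right (fun z => k1 z ^ (2:ℝ)) (hk1m.pow_const _) y]
    simp_rw [inner]
    exact lintegral_mul_const _ (hgm.pow_const _)
  have hIP : ∫⁻ q : E3 × E3, f q.1 ^ (4/3:ℝ) * g q.2 ^ (4/3:ℝ) ∂π = Nf * Ng := by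
    rw [hπdef, lintegral_prod _ hm3.aemeasurable]
    have inner : ∀ x : E3, (∫⁻ y, f x ^ (4/3:ℝ) * g y ^ (4/3:ℝ)) = f x ^ (4/3:ℝ) * Ng := by
      intro x
      rw [lintegral_const_mul _ (hgm.pow_const _)]
    simp_rw [inner]
    exact lintegral_mul_const _ (hfm.pow_const _)
  -- near-field bound
  have bound1 : ∫⁻ q : E3 × E3, f q.1 * g q.2 * k1 (q.1 - q.2) ∂π ≤
      ENNReal.ofReal (CC * (eLpNorm ρ p volume).toReal * (eLpNorm σ p volume).toReal
        * R ^ (-(1:ℝ)/2)) := by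
    have h := holder3 π (fun q => f q.1) (fun q => g q.2) (fun q => k1 (q.1 - q.2))
      (hfm.comp measurable_fst) (hgm.comp measurable_snd) (hk1m.comp hsubm)
    rw [hIH, hIG, hIP] at h
    have h1 : ∀ a : ℝ≥0∞, a ^ (1/4:ℝ) * a ^ (1/2:ℝ) = a ^ (3/4:ℝ) := fun a => by
      rw [← ENNReal.rpow_add_of_nonneg _ _ (by norm_num) (by norm_num)]; norm_num
    have h2 : ∀ a : ℝ≥0∞, a ^ (1/4:ℝ) * a ^ (1/4:ℝ) = a ^ (1/2:ℝ) := fun a => by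
      rw [← ENNReal.rpow_add_of_nonneg _ _ (by norm_num) (by norm_num)]; norm_num
    have alg : (Nf * K2) ^ (1/4:ℝ) * (Ng * K2) ^ (1/4:ℝ) * (Nf * Ng) ^ (1/2:ℝ) =
        Nf ^ (3/4:ℝ) * Ng ^ (3/4:ℝ) * K2 ^ (1/2:ℝ) := by
      rw [ENNReal.mul_rpow_of_nonneg _ _ (by norm_num : (0:ℝ) ≤ 1/4),
        ENNReal.mul_rpow_of_nonneg _ _ (by norm_num : (0:ℝ) ≤ 1/4),
        ENNReal.mul_rpow_of_nonneg _ _ (by norm_num : (0:ℝ) ≤ 1/2),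
        ← h1 Nf, ← h1 Ng, ← h2 K2]
      ring
    rw [alg] at h
    refine le_trans h ?_
    have hK2half : K2 ^ (1/2:ℝ) ≤ ENNReal.ofReal (CC * R ^ (-(1:ℝ)/2)) := by
      calc K2 ^ (1/2:ℝ) ≤ (8 * ENNReal.ofReal R⁻¹ * B) ^ (1/2:ℝ) :=
            ENNReal.rpow_le_rpow hK2 (by norm_num)
        _ = ENNReal.ofReal (8 * R⁻¹ * B') ^ (1/2:ℝ) := by
            congr 1
            rw [show ((8:ℝ≥0∞)) = ENNReal.ofReal (8:ℝ) by simp,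
              show B = ENNReal.ofReal B' by rw [hB'def, ENNReal.ofReal_toReal hBne],
              ← ENNReal.ofReal_mul (by norm_num), ← ENNReal.ofReal_mul (by positivity)]
        _ = ENNReal.ofReal ((8 * R⁻¹ * B') ^ ((1:ℝ)/2)) :=
            ENNReal.ofReal_rpow_of_nonneg (by positivity) (by norm_num)
        _ = ENNReal.ofReal (CC * R ^ (-(1:ℝ)/2)) := by
            congr 1
            have hinv : (R⁻¹) ^ ((1:ℝ)/2) = R ^ (-(1:ℝ)/2) := by
              rw [Real.inv_rpow hRpos.le, ← Real.rpow_neg hRpos.le]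
              norm_num
            rw [show 8 * R⁻¹ * B' = (8 * B') * R⁻¹ by ring,
              Real.mul_rpow (by positivity) (by positivity), hinv, hCC]
    calc Nf ^ (3/4:ℝ) * Ng ^ (3/4:ℝ) * K2 ^ (1/2:ℝ)
        ≤ ENNReal.ofReal ((eLpNorm ρ p volume).toReal) *
          ENNReal.ofReal ((eLpNorm σ p volume).toReal) *
          ENNReal.ofReal (CC * R ^ (-(1:ℝ)/2)) := by
          rw [hNf_or, hNg_or]
          exact mul_le_mul_right hK2half _
      _ = ENNReal.ofReal (CC * (eLpNorm ρ p volume).toReal * (eLpNorm σ p volume).toReal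
            * R ^ (-(1:ℝ)/2)) := by
          rw [← ENNReal.ofReal_mul (by positivity), ← ENNReal.ofReal_mul (by positivity)]
          congr 1
          ring
  -- mid-range bound
  have bound2 : ∫⁻ q : E3 × E3, f q.1 * g q.2 * (ENNReal.ofReal R * ind (q.1 - q.2)) ∂π ≤
      ENNReal.ofReal (R * M * S) := by
    rw [hπdef, lintegral_prod_symm _ Ψ2m.aemeasurable]
    have inner : ∀ y : E3, (∫⁻ x, f x * g y * (ENNReal.ofReal R * ind (x - y))) ≤
        g y * (ENNReal.ofReal R * ENNReal.ofReal S) := by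
      intro y
      have e : ∀ x : E3, f x * g y * (ENNReal.ofReal R * ind (x - y)) =
          g y * (ENNReal.ofReal R * (Set.indicator (Metric.ball y R) f x)) := by
        intro x
        by_cases h : x ∈ Metric.ball y R
        · have h0 : x - y ∈ Metric.ball (0:E3) R := by
            rw [Metric.mem_ball, dist_zero_right]
            rw [Metric.mem_ball, dist_eq_norm] at h
            exact h
          rw [hinddef]
          simp only [Set.indicator_of_mem h0, Set.indicator_of_mem h]
          ring
        · have h0 : x - y ∉ Metric.ball (0:E3) R := by
            rw [Metric.mem_ball, dist_zero_right]
            rw [Metric.mem_ball, dist_eq_norm] at h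
            exact h
          rw [hinddef]
          simp only [Set.indicator_of_notMem h0, Set.indicator_of_notMem h]
          simp
      simp_rw [e]
      rw [lintegral_const_mul _ (f := fun x => ENNReal.ofReal R * (Metric.ball y R).indicator f x)
        (measurable_const.mul (hfm.indicator measurableSet_ball)),
        lintegral_const_mul _ (hfm.indicator measurableSet_ball),
        lintegral_indicator measurableSet_ball]
      gcongr
      rw [hfdef, ← ofReal_integral_eq_lintegral_ofReal hρi.integrableOn
        (ae_restrict_of_ae (Filter.Eventually.of_forall hρ0))]
      exact hSle y
    calc ∫⁻ y, ∫⁻ x, f x * g y * (ENNReal.ofReal R * ind (x - y))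
        ≤ ∫⁻ y, g y * (ENNReal.ofReal R * ENNReal.ofReal S) := lintegral_mono inner
      _ = ENNReal.ofReal M * (ENNReal.ofReal R * ENNReal.ofReal S) := by
          rw [lintegral_mul_const _ hgm, hgint]
      _ = ENNReal.ofReal (R * M * S) := by
          rw [← ENNReal.ofReal_mul hRpos.le, ← ENNReal.ofReal_mul hM0]
          congr 1
          ring
  -- far-field bound
  have bound3 : ∫⁻ q : E3 × E3, f q.1 * g q.2 * ENNReal.ofReal R⁻¹ ∂π =
      ENNReal.ofReal (M ^ 2 / R) := by
    rw [hπdef, lintegral_prod _ Ψ3m.aemeasurable]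
    have inner : ∀ x : E3, (∫⁻ y, f x * g y * ENNReal.ofReal R⁻¹) =
        f x * (ENNReal.ofReal M * ENNReal.ofReal R⁻¹) := by
      intro x
      simp_rw [mul_assoc]
      rw [lintegral_const_mul _ (hgm.mul_const _)]
      congr 1
      rw [lintegral_mul_const _ hgm, hgint]
    simp_rw [inner]
    rw [lintegral_mul_const _ hfm, hfint,
      ← ENNReal.ofReal_mul hM0, ← ENNReal.ofReal_mul hM0]
    congr 1
    rw [pow_two]
    ring
  -- splitting
  have split : ∫⁻ q : E3 × E3, f q.1 * g q.2 * k (q.1 - q.2) ∂π ≤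
      (∫⁻ q : E3 × E3, f q.1 * g q.2 * k1 (q.1 - q.2) ∂π)
      + (∫⁻ q : E3 × E3, f q.1 * g q.2 * (ENNReal.ofReal R * ind (q.1 - q.2)) ∂π)
      + (∫⁻ q : E3 × E3, f q.1 * g q.2 * ENNReal.ofReal R⁻¹ ∂π) := by
    have mono : ∀ q : E3 × E3, f q.1 * g q.2 * k (q.1 - q.2) ≤
        f q.1 * g q.2 * k1 (q.1 - q.2)
        + f q.1 * g q.2 * (ENNReal.ofReal R * ind (q.1 - q.2))
        + f q.1 * g q.2 * ENNReal.ofReal R⁻¹ := by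
      intro q
      calc f q.1 * g q.2 * k (q.1 - q.2)
          ≤ f q.1 * g q.2 * (k1 (q.1 - q.2) + ENNReal.ofReal R * ind (q.1 - q.2)
              + ENNReal.ofReal R⁻¹) := mul_le_mul_right (ksplit _) _
        _ = _ := by ring
    refine le_trans (lintegral_mono mono) ?_
    rw [lintegral_add_left (f := fun q : E3 × E3 => f q.1 * g q.2 * k1 (q.1 - q.2)
      + f q.1 * g q.2 * (ENNReal.ofReal R * ind (q.1 - q.2))) (Ψ1m.add Ψ2m), lintegral_add_left Ψ1m]
  -- key estimate
  have key : (∫⁻ x, ∫⁻ y, f x * g y * k (x - y)) ≤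
      ENNReal.ofReal (R * M * S) + ENNReal.ofReal (M ^ 2 / R)
      + ENNReal.ofReal (CC * (eLpNorm ρ p volume).toReal * (eLpNorm σ p volume).toReal
          * R ^ (-(1:ℝ)/2)) := by
    calc (∫⁻ x, ∫⁻ y, f x * g y * k (x - y))
        = ∫⁻ q : E3 × E3, f q.1 * g q.2 * k (q.1 - q.2) ∂π :=
          (lintegral_prod _ Ψm.aemeasurable).symm
      _ ≤ _ := split
      _ ≤ ENNReal.ofReal (CC * (eLpNorm ρ p volume).toReal * (eLpNorm σ p volume).toReal
            * R ^ (-(1:ℝ)/2)) + ENNReal.ofReal (R * M * S) + ENNReal.ofReal (M ^ 2 / R) :=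
          add_le_add (add_le_add bound1 bound2) bound3.le
      _ = _ := by ring
  -- conversion of the Bochner integral
  set Φ : E3 → ℝ≥0∞ := fun x => ∫⁻ y, f x * g y * k (x - y) with hΦdef
  have hΦm : Measurable Φ := Ψm.lintegral_prod_right'
  have hinner : ∀ x : E3, (∫ y, ρ x * σ y / ‖x - y‖) = (Φ x).toReal := by
    intro x
    have hmeasy : AEStronglyMeasurable (fun y : E3 => ρ x * σ y / ‖x - y‖) volume :=
      ((measurable_const.mul hσm).div
        ((measurable_const.sub measurable_id).norm)).aestronglyMeasurable
    rw [integral_eq_lintegral_of_nonneg_ae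
      (Filter.Eventually.of_forall fun y =>
        div_nonneg (mul_nonneg (hρ0 x) (hσ0 y)) (norm_nonneg _)) hmeasy]
    congr 1
    refine lintegral_congr fun y => ?_
    rw [div_eq_mul_inv, ENNReal.ofReal_mul (mul_nonneg (hρ0 x) (hσ0 y)),
      ENNReal.ofReal_mul (hρ0 x)]
  have houter : (∫ x, ∫ y, ρ x * σ y / ‖x - y‖) =
      (∫⁻ x, ENNReal.ofReal ((Φ x).toReal)).toReal := by
    simp_rw [hinner]
    exact integral_eq_lintegral_of_nonneg_ae
      (Filter.Eventually.of_forall fun x => ENNReal.toReal_nonneg)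
      (hΦm.ennreal_toReal.aestronglyMeasurable)
  have hle : (∫⁻ x, ENNReal.ofReal ((Φ x).toReal)) ≤
      ENNReal.ofReal (R * M * S) + ENNReal.ofReal (M ^ 2 / R)
      + ENNReal.ofReal (CC * (eLpNorm ρ p volume).toReal * (eLpNorm σ p volume).toReal
          * R ^ (-(1:ℝ)/2)) :=
    le_trans (lintegral_mono fun x => ENNReal.ofReal_toReal_le) key
  rw [houter]
  have hfin : ENNReal.ofReal (R * M * S) + ENNReal.ofReal (M ^ 2 / R)
      + ENNReal.ofReal (CC * (eLpNorm ρ p volume).toReal * (eLpNorm σ p volume).toReal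
          * R ^ (-(1:ℝ)/2)) ≠ ∞ := by
    refine ENNReal.add_ne_top.mpr ⟨ENNReal.add_ne_top.mpr ⟨?_, ?_⟩, ?_⟩ <;>
      exact ENNReal.ofReal_ne_top
  refine le_trans (ENNReal.toReal_mono hfin hle) ?_
  rw [ENNReal.toReal_add (ENNReal.add_ne_top.mpr ⟨ENNReal.ofReal_ne_top, ENNReal.ofReal_ne_top⟩)
      ENNReal.ofReal_ne_top,
    ENNReal.toReal_add ENNReal.ofReal_ne_top ENNReal.ofReal_ne_top,
    ENNReal.toReal_ofReal (by positivity), ENNReal.toReal_ofReal (by positivity),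
    ENNReal.toReal_ofReal (by positivity)]

/-- Splitting estimate for the potential energy: for nonnegative
`ρ, σ ∈ L¹ ∩ L^{4/3}(ℝ³)` of mass `M` and any `R > 1`,
`∬ ρ(x)σ(y)/|x-y| ≤ R M sup_y ∫_{B_R(y)} ρ + M²/R + C ‖ρ‖_{4/3} ‖σ‖_{4/3} R^{-1/2}`. -/
theorem stmt_4 :
    ∃ C : ℝ, 0 < C ∧
      ∀ (ρ σ : EuclideanSpace ℝ (Fin 3) → ℝ) (M R : ℝ),
        (∀ x, 0 ≤ ρ x) → (∀ x, 0 ≤ σ x) →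
        Integrable ρ volume → Integrable σ volume →
        (∫ x, ρ x) = M → (∫ x, σ x) = M →
        MemLp ρ (ENNReal.ofReal (4 / 3)) volume →
        MemLp σ (ENNReal.ofReal (4 / 3)) volume →
        1 < R →
        (∫ x, ∫ y, ρ x * σ y / ‖x - y‖) ≤
          R * M * (⨆ y : EuclideanSpace ℝ (Fin 3),
              ∫ x in Metric.ball y R, ρ x)
          + M ^ 2 / R
          + C * (eLpNorm ρ (ENNReal.ofReal (4 / 3)) volume).toReal
              * (eLpNorm σ (ENNReal.ofReal (4 / 3)) volume).toReal
              * R ^ (-(1 : ℝ) / 2) := by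
  refine ⟨(8 * (volume (Metric.ball (0:E3) 1)).toReal) ^ ((1:ℝ)/2), ?_, ?_⟩
  · have hBpos : 0 < (volume (Metric.ball (0:E3) 1)).toReal :=
      ENNReal.toReal_pos (Metric.measure_ball_pos volume 0 one_pos).ne' measure_ball_lt_top.ne
    positivity
  · intro ρ σ M R hρ0 hσ0 hρi hσi hρM hσM hρp hσp hR
    set ρ' : E3 → ℝ := fun x => max (hρi.1.mk ρ x) 0 with hρ'def
    set σ' : E3 → ℝ := fun x => max (hσi.1.mk σ x) 0 with hσ'def
    have hρ'm : Measurable ρ' := (hρi.1.measurable_mk).max measurable_const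
    have hσ'm : Measurable σ' := (hσi.1.measurable_mk).max measurable_const
    have hρ'ae : ρ =ᵐ[volume] ρ' := by
      filter_upwards [hρi.1.ae_eq_mk] with x hx
      rw [hρ'def]
      simp only [← hx]
      exact (max_eq_left (hρ0 x)).symm
    have hσ'ae : σ =ᵐ[volume] σ' := by
      filter_upwards [hσi.1.ae_eq_mk] with x hx
      rw [hσ'def]
      simp only [← hx]
      exact (max_eq_left (hσ0 x)).symm
    have key := main_meas ρ' σ' M R hρ'm hσ'm (fun x => le_max_right _ _)
      (fun x => le_max_right _ _) (hρi.congr hρ'ae) (hσi.congr hσ'ae)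
      (by rw [← integral_congr_ae hρ'ae, hρM]) (by rw [← integral_congr_ae hσ'ae, hσM])
      (hρp.ae_eq hρ'ae) (hσp.ae_eq hσ'ae) hR
    have eL : (∫ x, ∫ y, ρ x * σ y / ‖x - y‖) = ∫ x, ∫ y, ρ' x * σ' y / ‖x - y‖ := by
      refine integral_congr_ae ?_
      filter_upwards [hρ'ae] with x hx
      refine integral_congr_ae ?_
      filter_upwards [hσ'ae] with y hy
      rw [hx, hy]
    have eS : ∀ y : E3, (∫ x in Metric.ball y R, ρ x) = ∫ x in Metric.ball y R, ρ' x :=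
      fun y => integral_congr_ae (ae_restrict_of_ae hρ'ae)
    have eNρ : eLpNorm ρ (ENNReal.ofReal (4/3)) volume
        = eLpNorm ρ' (ENNReal.ofReal (4/3)) volume := eLpNorm_congr_ae hρ'ae
    have eNσ : eLpNorm σ (ENNReal.ofReal (4/3)) volume
        = eLpNorm σ' (ENNReal.ofReal (4/3)) volume := eLpNorm_congr_ae hσ'ae
    rw [eL, eNρ, eNσ, iSup_congr eS]
    exact key
end
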